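/- Suppose (X, h) is an almost representable polymatroid and 0 ≤ ε ≤ h(X). Then the ε-perturbation g, defined by g(A) := min(h(A), h(X) − ε) for all A ⊆ X, is almost representable. -/

import Mathlib

open Module Filter Topology

/-- A representation of a rank function on ground set `X` by subspaces of a
finite-dimensional vector space `W` over a finite field `F`. -/
structure SubspaceRep {X : Type} (h : Finset X → ℝ) where
  F : Type
  W : Type
  [fieldF : Field F]
  [fintypeF : Fintype F]
  [addCommGroupW : AddCommGroup W]
  [moduleW : Module F W]
  [finiteDimensionalW : FiniteDimensional F W]
  V : X → Submodule F W
  rank_eq : ∀ A : Finset X, h A = (Module.finrank F ↥(A.sup V) : ℝ)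

/-- `h` is representable: it is `q`-representable for some prime power `q`
(equivalently, it is given by subspace dimensions over some finite field). -/
def IsRepresentable {X : Type} (h : Finset X → ℝ) : Prop := Nonempty (SubspaceRep h)

/-- `h` is even representable: `2^m`-representable for some positive integer `m`. -/
def EvenRepresentable {X : Type} (h : Finset X → ℝ) : Prop :=
  ∃ (r : SubspaceRep h) (m : ℕ), 0 < m ∧ Nat.card r.F = 2 ^ m

/-- `h` is odd representable: `p^m`-representable for some odd prime `p` and positive `m`. -/
def OddRepresentable {X : Type} (h : Finset X → ℝ) : Prop :=
  ∃ (r : SubspaceRep h) (p m : ℕ), p.Prime ∧ Odd p ∧ 0 < m ∧ Nat.card r.F = p ^ m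

/-- Polymatroid axioms: normalization, nonnegativity, monotonicity, submodularity. -/
def IsPolymatroid {X : Type} [DecidableEq X] (h : Finset X → ℝ) : Prop :=
  h ∅ = 0 ∧ (∀ A, 0 ≤ h A) ∧ (∀ A B : Finset X, A ⊆ B → h A ≤ h B) ∧
    ∀ A B : Finset X, h (A ∪ B) + h (A ∩ B) ≤ h A + h B

/-- The Ingleton expression `J_h(A1,A2,A3,A4)`. -/
noncomputable def ingletonJ {X : Type} [DecidableEq X] (h : Finset X → ℝ)
    (A1 A2 A3 A4 : Finset X) : ℝ :=
  h (A1 ∪ A2) + h (A1 ∪ A3) + h (A1 ∪ A4) + h (A2 ∪ A3) + h (A2 ∪ A4)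
    - h A1 - h A2 - h (A3 ∪ A4) - h (A1 ∪ A2 ∪ A3) - h (A1 ∪ A2 ∪ A4)

/-- `h` is Ingletonian if all Ingleton expressions are nonnegative. -/
def IsIngletonian {X : Type} [DecidableEq X] (h : Finset X → ℝ) : Prop :=
  ∀ A1 A2 A3 A4 : Finset X, 0 ≤ ingletonJ h A1 A2 A3 A4

/-- The convex cone generated by a set `S` of rank functions (viewed as points of
`ℝ^{2^|X|}`): all finite nonnegative combinations of elements of `S`. -/
def coneHull {X : Type} (S : Set (Finset X → ℝ)) : Set (Finset X → ℝ) :=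
  {x | ∃ (m : ℕ) (c : Fin m → ℝ) (f : Fin m → Finset X → ℝ),
    (∀ i, 0 ≤ c i) ∧ (∀ i, f i ∈ S) ∧ x = ∑ i, c i • f i}

/-- `h` is almost representable: a coordinatewise limit `h = lim_i c_i g_i` with
`c_i > 0` and each `g_i` representable. -/
def AlmostRepresentable {X : Type} (h : Finset X → ℝ) : Prop :=
  ∃ (g : ℕ → Finset X → ℝ) (c : ℕ → ℝ), (∀ i, IsRepresentable (g i)) ∧
    (∀ i, 0 < c i) ∧ ∀ A : Finset X, Tendsto (fun i => c i * g i A) atTop (𝓝 (h A))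

/-- `h` is almost even representable. -/
def AlmostEvenRepresentable {X : Type} (h : Finset X → ℝ) : Prop :=
  ∃ (g : ℕ → Finset X → ℝ) (c : ℕ → ℝ), (∀ i, EvenRepresentable (g i)) ∧
    (∀ i, 0 < c i) ∧ ∀ A : Finset X, Tendsto (fun i => c i * g i A) atTop (𝓝 (h A))

/-- `h` is almost odd representable. -/
def AlmostOddRepresentable {X : Type} (h : Finset X → ℝ) : Prop :=
  ∃ (g : ℕ → Finset X → ℝ) (c : ℕ → ℝ), (∀ i, OddRepresentable (g i)) ∧
    (∀ i, 0 < c i) ∧ ∀ A : Finset X, Tendsto (fun i => c i * g i A) atTop (𝓝 (h A))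

/-- `h` is cc-representable: it lies in the closure of the convex cone generated by
the set `Υ[X]` of representable rank functions on `X`. -/
def CcRepresentable {X : Type} (h : Finset X → ℝ) : Prop :=
  h ∈ closure (coneHull {g : Finset X → ℝ | IsRepresentable g})

/-- A matroid: an integer-valued polymatroid with `h(A) ≤ |A|`. -/
def IsIntMatroid {X : Type} [DecidableEq X] (h : Finset X → ℝ) : Prop :=
  IsPolymatroid h ∧ (∀ A : Finset X, ∃ z : ℤ, h A = (z : ℝ)) ∧ ∀ A : Finset X, h A ≤ A.card

/-- A circuit of a matroid: a minimal dependent set. -/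
def IsCircuit {X : Type} (h : Finset X → ℝ) (C : Finset X) : Prop :=
  h C < C.card ∧ ∀ D : Finset X, D ⊂ C → h D = D.card

/-- A connected matroid: every pair of distinct elements lies in a common circuit. -/
def IsConnectedMatroid {X : Type} [DecidableEq X] (h : Finset X → ℝ) : Prop :=
  IsIntMatroid h ∧ ∀ x y : X, x ≠ y → ∃ C : Finset X, IsCircuit h C ∧ x ∈ C ∧ y ∈ C

/-!
Multiplying a representable function by `2 ^ s` keeps it representable (direct sums of copies),
so the scalars in `h = lim c i • g i` may be taken to tend to `0`, and then `ε` is a limit of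
`c i * t i` with integers `t i ≤ g i X`. Truncating a representable `g` by an integer `t`, i.e.
passing to `A ↦ min (g A) (g X - t)`, keeps it representable: over a field with more than
`2 ^ |X|` elements the total span contains a vector `u` outside each of its proper subspaces
`⨆ i ∈ A, V i`, and quotienting by `u` truncates by one. The rescaled truncations converge to
the `ε`-perturbation of `h`.
-/

attribute [instance] SubspaceRep.fieldF SubspaceRep.fintypeF SubspaceRep.addCommGroupW
  SubspaceRep.moduleW SubspaceRep.finiteDimensionalW

open TensorProduct

namespace Submodule

section Semiring

variable {R M M' : Type*} [Semiring R] [AddCommMonoid M] [Module R M] [AddCommMonoid M']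
  [Module R M']

theorem map_finsetSup {ι : Type*} (f : M →ₗ[R] M') (V : ι → Submodule R M) (A : Finset ι) :
    (A.sup V).map f = A.sup fun i => (V i).map f :=
  Finset.apply_sup_eq_sup_comp _ (fun _ _ => map_sup _ _ _) (map_bot f)

theorem prod_finsetSup {ι : Type*} (V : ι → Submodule R M) (V' : ι → Submodule R M')
    (A : Finset ι) : (A.sup V).prod (A.sup V') = A.sup fun i => (V i).prod (V' i) := by
  classical
  induction A using Finset.induction_on with
  | empty => simp
  | insert _ _ _ ih => simp only [Finset.sup_insert, ← ih, prod_sup_prod]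

end Semiring

section BaseChange

variable {R M : Type*} (A : Type*) [CommSemiring R] [Semiring A] [Algebra R A]
  [AddCommMonoid M] [Module R M]

theorem baseChange_sup (p q : Submodule R M) :
    (p ⊔ q).baseChange A = p.baseChange A ⊔ q.baseChange A := by
  conv_lhs => rw [← p.span_eq, ← q.span_eq, ← span_union]
  rw [baseChange_span, Set.image_union, span_union, ← baseChange_span, ← baseChange_span,
    span_eq, span_eq]

theorem baseChange_finsetSup {ι : Type*} (V : ι → Submodule R M) (s : Finset ι) :
    (s.sup V).baseChange A = s.sup fun i => (V i).baseChange A :=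
  Finset.apply_sup_eq_sup_comp _ (fun _ _ => baseChange_sup A _ _) (baseChange_bot A)

theorem finrank_baseChange {K W : Type*} (L : Type*) [Field K] [Field L] [Algebra K L]
    [AddCommGroup W] [Module K W] (p : Submodule K W) :
    finrank L (p.baseChange L) = finrank K p := by
  have hinj : Function.Injective (p.subtype.baseChange L) := by
    rw [LinearMap.baseChange_eq_ltensor]
    exact Module.Flat.lTensor_preserves_injective_linearMap _ p.injective_subtype
  rw [baseChange, LinearMap.finrank_range_of_inj hinj, Module.finrank_baseChange]

end BaseChange

variable {K W : Type*} [Field K] [AddCommGroup W] [Module K W]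

theorem finrank_prod [FiniteDimensional K W] {W' : Type*} [AddCommGroup W'] [Module K W']
    [FiniteDimensional K W'] (p : Submodule K W) (q : Submodule K W') :
    finrank K (p.prod q) = finrank K p + finrank K q := by
  rw [← p.range_subtype, ← q.range_subtype, ← LinearMap.range_prodMap,
    LinearMap.finrank_range_of_inj, Module.finrank_prod, p.range_subtype, q.range_subtype]
  exact Function.Injective.prodMap p.injective_subtype q.injective_subtype

theorem exists_mem_forall_notMem_of_lt [Finite K] {ι : Type*} [Fintype ι] {S : Submodule K W}
    {T : ι → Submodule K W} (hT : ∀ i, T i < S) (hcard : Fintype.card ι < Nat.card K) :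
    ∃ u ∈ S, ∀ i, u ∉ T i := by
  have hne : ∀ i, (T i).comap S.subtype ≠ ⊤ := fun i h =>
    (hT i).not_ge (comap_subtype_eq_top.mp h)
  have := iUnion_ssubset_of_forall_ne_top_of_card_lt Finset.univ _ hne
    (by rwa [ENat.card_eq_coe_natCard, Finset.card_univ, Nat.cast_lt])
  obtain ⟨⟨u, huS⟩, -, hu⟩ := Set.exists_of_ssubset this
  exact ⟨u, huS, fun i hi => hu (Set.mem_biUnion (Finset.mem_univ i) hi)⟩

theorem finrank_map_mkQ_add_finrank_inf [FiniteDimensional K W] (p U : Submodule K W) :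
    finrank K (p.map U.mkQ) + finrank K ↥(p ⊓ U) = finrank K p := by
  have h := (U.mkQ.comp p.subtype).finrank_range_add_finrank_ker
  rw [LinearMap.range_comp, range_subtype, LinearMap.ker_comp, ker_mkQ] at h
  rwa [LinearEquiv.finrank_eq (equivMapOfInjective p.subtype p.injective_subtype _),
    map_comap_subtype] at h

variable [FiniteDimensional K W] {p : Submodule K W} {u : W}

theorem finrank_map_mkQ_span_singleton_of_notMem (hu : u ∉ p) :
    finrank K (p.map (K ∙ u).mkQ) = finrank K p := by
  have hu0 : u ≠ 0 := fun h => hu (h ▸ p.zero_mem)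
  have := finrank_map_mkQ_add_finrank_inf p (K ∙ u)
  rwa [((disjoint_span_singleton' hu0).mpr hu).eq_bot, finrank_bot, add_zero] at this

theorem finrank_map_mkQ_span_singleton_of_mem (hu : u ∈ p) (hu0 : u ≠ 0) :
    finrank K (p.map (K ∙ u).mkQ) + 1 = finrank K p := by
  have := finrank_map_mkQ_add_finrank_inf p (K ∙ u)
  rwa [inf_eq_right.mpr ((span_singleton_le_iff_mem u p).mpr hu), finrank_span_singleton hu0]
    at this

end Submodule

def perturbation {X : Type} [Fintype X] (h : Finset X → ℝ) (ε : ℝ) : Finset X → ℝ :=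
  fun A => min (h A) (h Finset.univ - ε)

section Perturbation

variable {X : Type} [Fintype X] {h : Finset X → ℝ} {ε : ℝ}

theorem perturbation_univ (hε : 0 ≤ ε) : perturbation h ε Finset.univ = h Finset.univ - ε :=
  min_eq_right (by linarith)

theorem perturbation_perturbation {s t : ℝ} (hs : 0 ≤ s) (ht : 0 ≤ t) :
    perturbation (perturbation h s) t = perturbation h (s + t) := by
  funext A
  rw [perturbation, perturbation_univ hs, perturbation, perturbation, min_assoc,
    min_eq_right (sub_le_self _ ht), sub_sub]

theorem perturbation_zero (hh : ∀ A, h A ≤ h Finset.univ) : perturbation h 0 = h :=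
  funext fun A => by simp [perturbation, hh A]

theorem mul_perturbation {c : ℝ} (hc : 0 ≤ c) (A : Finset X) :
    c * perturbation h ε A = perturbation (fun A => c * h A) (c * ε) A := by
  rw [perturbation, perturbation, mul_min_of_nonneg _ _ hc, mul_sub]

theorem Filter.Tendsto.perturbation {ι : Type*} {l : Filter ι} {f : ι → Finset X → ℝ}
    {δ : ι → ℝ} (hf : ∀ A, Tendsto (fun i => f i A) l (𝓝 (h A))) (hδ : Tendsto δ l (𝓝 ε))
    (A : Finset X) :
    Tendsto (fun i => perturbation (f i) (δ i) A) l (𝓝 (perturbation h ε A)) :=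
  (hf A).min ((hf Finset.univ).sub hδ)

end Perturbation

namespace SubspaceRep

variable {X : Type} {g : Finset X → ℝ}

theorem le_univ [Fintype X] (r : SubspaceRep g) (A : Finset X) : g A ≤ g Finset.univ := by
  rw [r.rank_eq, r.rank_eq]
  exact_mod_cast Submodule.finrank_mono (Finset.sup_mono (Finset.subset_univ A))

def baseChange (r : SubspaceRep g) (L : Type) [Field L] [Fintype L] [Algebra r.F L] :
    SubspaceRep g where
  F := L
  W := L ⊗[r.F] r.W
  V i := (r.V i).baseChange L
  rank_eq A := by
    rw [r.rank_eq, ← Submodule.finrank_baseChange L, Submodule.baseChange_finsetSup]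

theorem exists_lt_card_field (r : SubspaceRep g) (N : ℕ) :
    ∃ r' : SubspaceRep g, N < Nat.card r'.F := by
  obtain ⟨p, _⟩ := CharP.exists r.F
  have : Fact p.Prime := ⟨CharP.char_is_prime r.F p⟩
  let _ := Fintype.ofFinite (FiniteField.Extension r.F p (N + 1))
  refine ⟨r.baseChange (FiniteField.Extension r.F p (N + 1)), ?_⟩
  change N < Nat.card (FiniteField.Extension r.F p (N + 1))
  rw [FiniteField.natCard_extension]
  exact (Nat.lt_succ_self N).trans (Nat.lt_pow_self Finite.one_lt_card)

def double (r : SubspaceRep g) : SubspaceRep (fun A => 2 * g A) where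
  F := r.F
  W := r.W × r.W
  V i := (r.V i).prod (r.V i)
  rank_eq A := by
    rw [← Submodule.prod_finsetSup, Submodule.finrank_prod, r.rank_eq]
    push_cast
    ring

theorem isRepresentable_perturbation_one [Fintype X] (r : SubspaceRep g)
    (hcard : Fintype.card (Finset X) < Nat.card r.F) (hg : 1 ≤ g Finset.univ) :
    IsRepresentable (perturbation g 1) := by
  classical
  set S := Finset.univ.sup r.V with hS
  obtain ⟨u, huS, hu⟩ := Submodule.exists_mem_forall_notMem_of_lt
    (T := fun A : {A : Finset X // A.sup r.V < S} => A.1.sup r.V) (fun A => A.2)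
    ((Fintype.card_subtype_le _).trans_lt hcard)
  have hS_ne_bot : S ≠ ⊥ := by
    intro hbot
    rw [r.rank_eq, ← hS, hbot, finrank_bot] at hg
    norm_num at hg
  have hu0 : u ≠ 0 := by
    simpa using hu ⟨∅, by simpa [bot_lt_iff_ne_bot] using hS_ne_bot⟩
  refine ⟨⟨r.F, r.W ⧸ (r.F ∙ u), fun i => (r.V i).map (r.F ∙ u).mkQ, fun A => ?_⟩⟩
  have hAS : A.sup r.V ≤ S := Finset.sup_mono (Finset.subset_univ A)
  rw [← Submodule.map_finsetSup, perturbation, r.rank_eq, r.rank_eq, ← hS]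
  by_cases huA : u ∈ A.sup r.V
  · have hA : A.sup r.V = S := hAS.eq_of_not_lt fun h => hu ⟨A, h⟩ huA
    have := Submodule.finrank_map_mkQ_span_singleton_of_mem huA hu0
    rw [hA] at this ⊢
    rw [min_eq_right (by linarith), ← this]
    push_cast
    ring
  · have hlt := Submodule.finrank_lt_finrank_of_lt (hAS.lt_of_ne fun h => huA (h ▸ huS))
    rw [Submodule.finrank_map_mkQ_span_singleton_of_notMem huA, min_eq_left]
    have : ((finrank r.F ↥(A.sup r.V) + 1 : ℕ) : ℝ) ≤ finrank r.F ↥S := by exact_mod_cast hlt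
    push_cast at this
    linarith

end SubspaceRep

namespace IsRepresentable

variable {X : Type} {g : Finset X → ℝ}

theorem exists_nat_eq (hg : IsRepresentable g) (A : Finset X) : ∃ n : ℕ, g A = n :=
  let ⟨r⟩ := hg
  ⟨_, r.rank_eq A⟩

theorem two_pow_mul (hg : IsRepresentable g) (s : ℕ) :
    IsRepresentable fun A => 2 ^ s * g A := by
  induction s with
  | zero => simpa using hg
  | succ s ih =>
    obtain ⟨r⟩ := ih
    have : (fun A => 2 ^ (s + 1) * g A) = fun A => 2 * (2 ^ s * g A) := by
      funext A
      ring
    exact this ▸ ⟨r.double⟩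

theorem perturbation_one [Fintype X] (hg : IsRepresentable g) (h1 : 1 ≤ g Finset.univ) :
    IsRepresentable (perturbation g 1) := by
  obtain ⟨r⟩ := hg
  obtain ⟨r', hr'⟩ := r.exists_lt_card_field (Fintype.card (Finset X))
  exact r'.isRepresentable_perturbation_one hr' h1

theorem perturbation_natCast [Fintype X] (hg : IsRepresentable g) (t : ℕ)
    (ht : t ≤ g Finset.univ) : IsRepresentable (perturbation g t) := by
  induction t with
  | zero =>
    rw [Nat.cast_zero, perturbation_zero hg.some.le_univ]
    exact hg
  | succ t ih =>
    push_cast at ht ⊢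
    have h := (ih (by linarith)).perturbation_one
      (by rw [perturbation_univ t.cast_nonneg]; linarith)
    rwa [perturbation_perturbation t.cast_nonneg zero_le_one] at h

end IsRepresentable

theorem tendsto_mul_natFloor_div {ι : Type*} {l : Filter ι} {c : ι → ℝ} {ε : ℝ}
    (hc : ∀ i, 0 < c i) (hc0 : Tendsto c l (𝓝 0)) (hε : 0 ≤ ε) :
    Tendsto (fun i => c i * ⌊ε / c i⌋₊) l (𝓝 ε) := by
  refine tendsto_of_tendsto_of_tendsto_of_le_of_le (by simpa using tendsto_const_nhds.sub hc0)
    tendsto_const_nhds (fun i => ?_) (fun i => ?_)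
  · have := Nat.lt_floor_add_one (ε / c i)
    rw [div_lt_iff₀ (hc i)] at this
    dsimp only
    linarith
  · calc c i * ⌊ε / c i⌋₊ ≤ c i * (ε / c i) :=
          mul_le_mul_of_nonneg_left (Nat.floor_le (div_nonneg hε (hc i).le)) (hc i).le
      _ = ε := mul_div_cancel₀ ε (hc i).ne'

theorem AlmostRepresentable.exists_tendsto_zero {X : Type} {h : Finset X → ℝ}
    (hh : AlmostRepresentable h) :
    ∃ (g : ℕ → Finset X → ℝ) (c : ℕ → ℝ), (∀ i, IsRepresentable (g i)) ∧ (∀ i, 0 < c i) ∧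
      Tendsto c atTop (𝓝 0) ∧ ∀ A, Tendsto (fun i => c i * g i A) atTop (𝓝 (h A)) := by
  obtain ⟨g, c, hg, hc, hlim⟩ := hh
  choose s hs using fun i : ℕ => pow_unbounded_of_one_lt ((i + 1) * c i) one_lt_two
  have h2 : ∀ i, (0 : ℝ) < 2 ^ s i := fun i => by positivity
  refine ⟨fun i A => 2 ^ s i * g i A, fun i => c i / 2 ^ s i, fun i => (hg i).two_pow_mul _,
    fun i => div_pos (hc i) (h2 i), ?_, fun A => (hlim A).congr fun i => ?_⟩
  · refine squeeze_zero (fun i => (div_pos (hc i) (h2 i)).le) (fun i => ?_)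
      tendsto_one_div_add_atTop_nhds_zero_nat
    rw [div_le_div_iff₀ (h2 i) (by positivity)]
    linarith [hs i]
  · field_simp

theorem perturbation_of_almost_representable_general {X : Type} [Fintype X]
    (h : Finset X → ℝ) (halmost : AlmostRepresentable h)
    (ε : ℝ) (hε0 : 0 ≤ ε) (hε1 : ε ≤ h Finset.univ) :
    AlmostRepresentable (fun A => min (h A) (h Finset.univ - ε)) := by
  obtain ⟨g, c, hg, hc, hc0, hlim⟩ := halmost.exists_tendsto_zero
  choose N hN using fun i => (hg i).exists_nat_eq Finset.univ
  set t : ℕ → ℕ := fun i => min ⌊ε / c i⌋₊ (N i)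
  have ht : Tendsto (fun i => c i * t i) atTop (𝓝 ε) := by
    have hcN : Tendsto (fun i => c i * N i) atTop (𝓝 (h Finset.univ)) := by
      simpa [hN] using hlim Finset.univ
    simpa [t, mul_min_of_nonneg _ _ (hc _).le, min_eq_left hε1] using
      (tendsto_mul_natFloor_div hc hc0 hε0).min hcN
  refine ⟨fun i => perturbation (g i) (t i), c,
    fun i => (hg i).perturbation_natCast _ (by rw [hN]; exact_mod_cast min_le_right _ _), hc,
    fun A => ?_⟩
  exact (Tendsto.perturbation hlim ht A).congr fun i => (mul_perturbation (hc i).le A).symm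

/-- the ε-perturbation `g(A) := min(h(A), h(X) − ε)` of an almost
representable polymatroid `(X, h)` with `0 ≤ ε ≤ h(X)` is almost representable. -/
theorem perturbation_of_almost_representable {X : Type} [Fintype X] [DecidableEq X]
    (h : Finset X → ℝ) (hpoly : IsPolymatroid h) (halmost : AlmostRepresentable h)
    (ε : ℝ) (hε0 : 0 ≤ ε) (hε1 : ε ≤ h Finset.univ) :
    AlmostRepresentable (fun A => min (h A) (h Finset.univ - ε)) :=
  perturbation_of_almost_representable_general h halmost ε hε0 hε1
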